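/- Let N be a standard normal random variable and let x ∈ ℝ be fixed. Then as p → ∞, p · P(N² > 2·log p - log(log p) + x) → (1/√π)·exp(-x/2). -/

import Mathlib

/-!
Write `G t = ∫_t^∞ exp (-y²/2) dy`; by symmetry `P(N² > u) = 2 G(√u) / √(2π)`.
Mills' bounds `exp (-t²/2) / t ≤ (1 + t⁻²) G t` and `G t ≤ exp (-t²/2) / t` come from comparing
the integrand with `(1 + y⁻²) exp (-y²/2)` and `(y / t) exp (-y²/2)`, whose primitives
`-exp (-y²/2) / y` and `-exp (-y²/2) / t` are explicit; hence `G t ~ exp (-t²/2) / t`.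
The threshold `u = 2 log p - log log p + x` is chosen so that `p exp (-u/2) = √(log p) exp (-x/2)`,
and `u ~ 2 log p`, so `p P(N² > u) ~ 2 exp (-x/2) √(log p / u) / √(2π) → exp (-x/2) / √π`.
-/

open Real Filter MeasureTheory ProbabilityTheory Topology Asymptotics Set

noncomputable def gaussianTail (t : ℝ) : ℝ := ∫ y in Ioi t, rexp (-y ^ 2 / 2)

lemma integrable_exp_neg_sq_div_two : Integrable fun y : ℝ => rexp (-y ^ 2 / 2) := by
  simpa [neg_div, div_eq_inv_mul] using integrable_exp_neg_mul_sq (b := 1 / 2) (by norm_num)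

lemma integrable_mul_exp_neg_sq_div_two : Integrable fun y : ℝ => y * rexp (-y ^ 2 / 2) := by
  simpa [neg_div, div_eq_inv_mul] using
    integrable_rpow_mul_exp_neg_mul_sq (b := 1 / 2) (by norm_num) (s := 1) (by norm_num)

lemma hasDerivAt_exp_neg_sq_div_two (y : ℝ) :
    HasDerivAt (fun z : ℝ => rexp (-z ^ 2 / 2)) (-y * rexp (-y ^ 2 / 2)) y := by
  have h : HasDerivAt (fun z : ℝ => -z ^ 2 / 2) (-y) y :=
    ((hasDerivAt_pow 2 y).fun_neg.div_const 2).congr_deriv (by ring)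
  simpa [mul_comm] using h.exp

lemma tendsto_exp_neg_sq_div_two_atTop :
    Tendsto (fun z : ℝ => rexp (-z ^ 2 / 2)) atTop (𝓝 0) :=
  tendsto_exp_atBot.comp <|
    (tendsto_neg_atTop_atBot.comp (tendsto_pow_atTop two_ne_zero)).atBot_div_const two_pos

lemma integral_Ioi_mul_exp_neg_sq_div_two (t : ℝ) :
    ∫ y in Ioi t, y * rexp (-y ^ 2 / 2) = rexp (-t ^ 2 / 2) := by
  have hderiv (y : ℝ) (_ : y ∈ Ici t) :
      HasDerivAt (fun z => -rexp (-z ^ 2 / 2)) (y * rexp (-y ^ 2 / 2)) y :=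
    (hasDerivAt_exp_neg_sq_div_two y).neg.congr_deriv (by ring)
  rw [integral_Ioi_of_hasDerivAt_of_tendsto' hderiv integrable_mul_exp_neg_sq_div_two.integrableOn
    (by simpa using tendsto_exp_neg_sq_div_two_atTop.neg)]
  ring

lemma integrableOn_one_add_inv_sq_mul_exp_neg_sq_div_two {t : ℝ} (ht : 0 < t) :
    IntegrableOn (fun y => (1 + (y ^ 2)⁻¹) * rexp (-y ^ 2 / 2)) (Ioi t) := by
  refine (integrable_exp_neg_sq_div_two.integrableOn.const_mul (1 + (t ^ 2)⁻¹)).mono'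
    (by fun_prop) ((ae_restrict_mem measurableSet_Ioi).mono fun y (hy : t < y) => ?_)
  rw [norm_of_nonneg (by positivity)]
  gcongr

lemma integral_Ioi_one_add_inv_sq_mul_exp_neg_sq_div_two {t : ℝ} (ht : 0 < t) :
    ∫ y in Ioi t, (1 + (y ^ 2)⁻¹) * rexp (-y ^ 2 / 2) = rexp (-t ^ 2 / 2) / t := by
  have hderiv (y : ℝ) (hy : y ∈ Ici t) :
      HasDerivAt (fun z => -(z⁻¹ * rexp (-z ^ 2 / 2)))
        ((1 + (y ^ 2)⁻¹) * rexp (-y ^ 2 / 2)) y := by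
    have hy0 : y ≠ 0 := (ht.trans_le hy).ne'
    refine ((hasDerivAt_inv hy0).mul (hasDerivAt_exp_neg_sq_div_two y)).neg.congr_deriv ?_
    field_simp
    ring
  rw [integral_Ioi_of_hasDerivAt_of_tendsto' hderiv
    (integrableOn_one_add_inv_sq_mul_exp_neg_sq_div_two ht)
    (by simpa using (tendsto_inv_atTop_zero.mul tendsto_exp_neg_sq_div_two_atTop).neg)]
  field_simp
  ring

lemma gaussianTail_le {t : ℝ} (ht : 0 < t) : gaussianTail t ≤ rexp (-t ^ 2 / 2) / t := by
  calc gaussianTail t ≤ ∫ y in Ioi t, t⁻¹ * (y * rexp (-y ^ 2 / 2)) := by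
        refine setIntegral_mono_on integrable_exp_neg_sq_div_two.integrableOn
          (integrable_mul_exp_neg_sq_div_two.integrableOn.const_mul _) measurableSet_Ioi
          fun y (hy : t < y) => ?_
        rw [← mul_assoc, ← div_eq_inv_mul]
        exact le_mul_of_one_le_left (exp_pos _).le ((one_le_div ht).2 hy.le)
    _ = rexp (-t ^ 2 / 2) / t := by
        rw [integral_const_mul, integral_Ioi_mul_exp_neg_sq_div_two, inv_mul_eq_div]

lemma div_le_one_add_inv_sq_mul_gaussianTail {t : ℝ} (ht : 0 < t) :
    rexp (-t ^ 2 / 2) / t ≤ (1 + (t ^ 2)⁻¹) * gaussianTail t := by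
  rw [← integral_Ioi_one_add_inv_sq_mul_exp_neg_sq_div_two ht, gaussianTail, ← integral_const_mul]
  refine setIntegral_mono_on ?_ (integrable_exp_neg_sq_div_two.integrableOn.const_mul _)
    measurableSet_Ioi fun y (hy : t < y) => ?_
  · exact integrableOn_one_add_inv_sq_mul_exp_neg_sq_div_two ht
  · gcongr

lemma gaussianTail_isEquivalent :
    gaussianTail ~[atTop] fun t => rexp (-t ^ 2 / 2) / t := by
  refine isEquivalent_of_tendsto_one ?_
  have hlower : Tendsto (fun t : ℝ => (1 + (t ^ 2)⁻¹)⁻¹) atTop (𝓝 1) := by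
    simpa using (((tendsto_pow_atTop (α := ℝ) two_ne_zero).inv_tendsto_atTop.const_add 1).inv₀
      (by norm_num))
  refine tendsto_of_tendsto_of_tendsto_of_le_of_le' hlower tendsto_const_nhds ?_ ?_
    <;> filter_upwards [eventually_gt_atTop 0] with t ht
  · rw [Pi.div_apply, inv_le_iff_one_le_mul₀' (by positivity), ← mul_div_assoc,
      one_le_div₀ (by positivity)]
    exact div_le_one_add_inv_sq_mul_gaussianTail ht
  · exact (div_le_one (by positivity)).2 (gaussianTail_le ht)

lemma gaussianReal_real_Ioi (t : ℝ) :
    (gaussianReal 0 1).real (Ioi t) = (√(2 * π))⁻¹ * gaussianTail t := by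
  rw [measureReal_def, gaussianReal_apply_eq_integral 0 one_ne_zero,
    ENNReal.toReal_ofReal
      (setIntegral_nonneg measurableSet_Ioi fun y _ => gaussianPDFReal_nonneg 0 1 y),
    gaussianTail, ← integral_const_mul]
  simp [gaussianPDFReal]

lemma gaussianReal_real_Iio_neg (t : ℝ) :
    (gaussianReal 0 1).real (Iio (-t)) = (gaussianReal 0 1).real (Ioi t) := by
  have : Iio (-t) = (fun y => -y) ⁻¹' Ioi t := by ext y; simp
  rw [this, ← map_measureReal_apply (by fun_prop) measurableSet_Ioi, gaussianReal_map_neg, neg_zero]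

lemma gaussianReal_real_sq_gt {u : ℝ} (hu : 0 ≤ u) :
    (gaussianReal 0 1).real {y | u < y ^ 2} = 2 * (√(2 * π))⁻¹ * gaussianTail √u := by
  have hset : {y : ℝ | u < y ^ 2} = Iio (-√u) ∪ Ioi √u := by
    ext y
    rw [mem_ofPred_eq, ← sq_sqrt hu, sq_lt_sq, abs_of_nonneg (sqrt_nonneg u), lt_abs]
    simp [lt_neg, or_comm]
  have hdisj : Disjoint (Iio (-√u)) (Ioi √u) :=
    (Ioi_disjoint_Iio_of_le (neg_le_self (sqrt_nonneg u))).symm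
  rw [hset, measureReal_union hdisj measurableSet_Ioi, gaussianReal_real_Iio_neg,
    gaussianReal_real_Ioi]
  ring

lemma tendsto_two_mul_sub_log_add_atTop (x : ℝ) :
    Tendsto (fun L : ℝ => 2 * L - log L + x) atTop atTop := by
  refine tendsto_atTop_mono' _ ?_ (tendsto_atTop_add_const_right _ x tendsto_id)
  filter_upwards [eventually_ge_atTop 0] with L hL
  dsimp only [id]
  linarith [log_le_self hL]

lemma tendsto_div_two_mul_sub_log_add (x : ℝ) :
    Tendsto (fun L : ℝ => L / (2 * L - log L + x)) atTop (𝓝 (1 / 2)) := by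
  have h : Tendsto (fun L : ℝ => 2 - log L / L + x / L) atTop (𝓝 (2 - 0 + 0)) :=
    (tendsto_const_nhds.sub isLittleO_log_id_atTop.tendsto_div_nhds_zero).add
      (tendsto_const_nhds.div_atTop tendsto_id)
  rw [show (1 / 2 : ℝ) = (2 - 0 + 0)⁻¹ by norm_num]
  refine (h.inv₀ (by norm_num)).congr' ?_
  filter_upwards [eventually_gt_atTop 0] with L hL
  field_simp

lemma mul_exp_neg_half_two_mul_log_sub_log_log_add {p : ℝ} (hp : 1 < p) (x : ℝ) :
    p * rexp (-(2 * log p - log (log p) + x) / 2) = √(log p) * rexp (-x / 2) := by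
  have hlog : 0 < log p := log_pos hp
  rw [show -(2 * log p - log (log p) + x) / 2 = -log p + log (log p) / 2 + -x / 2 by ring,
    exp_add, exp_add, exp_neg, exp_log (by linarith), ← log_sqrt hlog.le, exp_log (by positivity)]
  field_simp

theorem tendsto_mul_gaussianReal_sq_gt (x : ℝ) :
    Tendsto (fun p : ℝ => p * (gaussianReal 0 1).real {y | 2 * log p - log (log p) + x < y ^ 2})
      atTop (𝓝 (1 / √π * rexp (-x / 2))) := by
  set u : ℝ → ℝ := fun p => 2 * log p - log (log p) + x
  have hu : Tendsto u atTop atTop := (tendsto_two_mul_sub_log_add_atTop x).comp tendsto_log_atTop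
  have hratio : Tendsto (fun p => log p / u p) atTop (𝓝 (1 / 2)) :=
    (tendsto_div_two_mul_sub_log_add x).comp tendsto_log_atTop
  have htail :
      (fun p => gaussianTail √(u p)) ~[atTop] fun p => rexp (-√(u p) ^ 2 / 2) / √(u p) :=
    gaussianTail_isEquivalent.comp_tendsto (tendsto_sqrt_atTop.comp hu)
  have hequiv : (fun p : ℝ => p * (gaussianReal 0 1).real {y | u p < y ^ 2}) ~[atTop]
      fun p => 2 * (√(2 * π))⁻¹ * rexp (-x / 2) * √(log p / u p) := by
    refine (((IsEquivalent.refl (u := fun p : ℝ => p * (2 * (√(2 * π))⁻¹))).mul htail).congr_left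
      ?_).congr_right ?_
    · filter_upwards [hu.eventually_ge_atTop 0] with p hp
      simp only [Pi.mul_apply, gaussianReal_real_sq_gt hp]
      ring
    · filter_upwards [hu.eventually_gt_atTop 0, eventually_gt_atTop 1] with p hp hp1
      rw [Pi.mul_apply, sq_sqrt hp.le, sqrt_div' _ hp.le]
      have hexp : p * rexp (-u p / 2) = √(log p) * rexp (-x / 2) :=
        mul_exp_neg_half_two_mul_log_sub_log_log_add hp1 x
      linear_combination (2 * (√(2 * π))⁻¹ / √(u p)) * hexp
  refine hequiv.tendsto_nhds_iff.2 ?_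
  have hconst : 2 * (√(2 * π))⁻¹ * rexp (-x / 2) * √(1 / 2) = 1 / √π * rexp (-x / 2) := by
    rw [sqrt_mul (by norm_num), sqrt_div' _ (by norm_num)]
    field_simp
    simp
  exact hconst ▸ ((continuous_sqrt.tendsto _).comp hratio).const_mul _

/-- For `N` standard normal and fixed `x ∈ ℝ`, as `p → ∞`,
`p · P(N² > 2 log p - log log p + x) → (1/√π)·exp(-x/2)`. -/
theorem stmt1 (x : ℝ) :
    Tendsto
      (fun p : ℕ =>
        (p : ℝ) *
          ((gaussianReal 0 1)
            {y : ℝ | y ^ 2 > 2 * Real.log p - Real.log (Real.log p) + x}).toReal)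
      atTop (nhds ((1 / Real.sqrt π) * Real.exp (-x / 2))) :=
  (tendsto_mul_gaussianReal_sq_gt x).comp tendsto_natCast_atTop_atTop
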